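/- arXiv:1011.5586 — 10 statements merged into one kernel-verified Lean document; each statement's English description precedes it below -/
import Mathlib

section
/- Let R be a commutative ring and let p₁, p₂, q₁, q₂, r₁, r₂, s₁, s₂ ∈ R, with at least one of p₁, p₂ invertible (a unit). Suppose that every triple (x, y, z) ∈ R³ satisfying the first linear system p₁x + p₂y = r₁ and p₁y + p₂z = r₂ also satisfies the second linear system q₁x + q₂y = s₁ and q₁y + q₂z = s₂. Then there exists a unique λ ∈ R such that q₁ = λp₁, q₂ = λp₂, s₁ = λr₁ and s₂ = λr₂. -/
/-- If every solution `(x,y,z)` of the system `p₁x + p₂y = r₁, p₁y + p₂z = r₂`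
also solves `q₁x + q₂y = s₁, q₁y + q₂z = s₂`, and at least one of `p₁, p₂` is a
unit, then there is a unique `λ` with `(q₁,q₂,s₁,s₂) = λ·(p₁,p₂,r₁,r₂)`. -/
theorem stmt_2 {R : Type*} [CommRing R]
    (p₁ p₂ q₁ q₂ r₁ r₂ s₁ s₂ : R) (hp : IsUnit p₁ ∨ IsUnit p₂)
    (hsub : ∀ x y z : R,
      (p₁ * x + p₂ * y = r₁ ∧ p₁ * y + p₂ * z = r₂) →
      (q₁ * x + q₂ * y = s₁ ∧ q₁ * y + q₂ * z = s₂)) :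
    ∃! lam : R, q₁ = lam * p₁ ∧ q₂ = lam * p₂ ∧ s₁ = lam * r₁ ∧ s₂ = lam * r₂ := by
  rcases hp with ⟨u, hu⟩ | ⟨u, hu⟩
  · set v := ((u⁻¹ : Rˣ) : R) with hvdef
    have hv : v * p₁ = 1 := by rw [← hu, hvdef]; exact u.inv_mul
    obtain ⟨h01, h02⟩ := hsub (v*(r₁ - p₂*(v*r₂))) (v*r₂) 0
      ⟨by linear_combination (r₁ - v*p₂*r₂) * hv, by linear_combination r₂*hv⟩
    obtain ⟨h11, h12⟩ := hsub (v*(r₁ - p₂*(v*(r₂-p₂)))) (v*(r₂-p₂)) 1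
      ⟨by linear_combination (r₁ - v*p₂*(r₂-p₂)) * hv, by linear_combination (r₂-p₂)*hv⟩
    refine ⟨v*q₁, ⟨by linear_combination (-q₁)*hv, by linear_combination h12 - h02,
      by linear_combination -h01 + v*r₂*(h12 - h02), by linear_combination -h02⟩, ?_⟩
    rintro m ⟨hm1, -, -, -⟩
    linear_combination (-v)*hm1 + (-m)*hv
  · set v := ((u⁻¹ : Rˣ) : R) with hvdef
    have hv : v * p₂ = 1 := by rw [← hu, hvdef]; exact u.inv_mul
    obtain ⟨h01, h02⟩ := hsub 0 (v*r₁) (v*(r₂ - p₁*(v*r₁)))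
      ⟨by linear_combination r₁*hv, by linear_combination (r₂ - p₁*v*r₁)*hv⟩
    obtain ⟨h11, h12⟩ := hsub 1 (v*(r₁-p₁)) (v*(r₂ - p₁*(v*(r₁-p₁))))
      ⟨by linear_combination (r₁-p₁)*hv, by linear_combination (r₂ - p₁*v*(r₁-p₁))*hv⟩
    refine ⟨v*q₂, ⟨by linear_combination h11 - h01, by linear_combination (-q₂)*hv,
      by linear_combination -h01, by linear_combination -h02 + v*r₁*(h11 - h01)⟩, ?_⟩
    rintro m ⟨-, hm2, -, -⟩
    linear_combination (-v)*hm2 + (-m)*hv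
end

section
/- Let R be a commutative ring and let a = (a₁, …, aₙ) and b = (b₁, …, bₙ) be vectors in Rⁿ, where a is a proper vector, i.e. at least one coordinate aᵢ is invertible (a unit) in R. If for every δ ∈ Rⁿ the implication (a • δ = 0 ⟹ b • δ = 0) holds, where • is the standard dot product, then there exists λ ∈ R with b = λ · a (i.e. bᵢ = λ·aᵢ for all i). -/
open Finset in
/-- If `a ∈ Rⁿ` is a proper vector (some coordinate is a unit) and for every
`δ ∈ Rⁿ` we have `a • δ = 0 ⟹ b • δ = 0`, then `b = λ · a` for some `λ ∈ R`. -/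
theorem stmt_3 {R : Type*} [CommRing R] {n : ℕ} (a b : Fin n → R)
    (ha : ∃ i, IsUnit (a i))
    (h : ∀ δ : Fin n → R, (∑ i, a i * δ i) = 0 → (∑ i, b i * δ i) = 0) :
    ∃ lam : R, ∀ i, b i = lam * a i := by
  obtain ⟨i₀, u, hu⟩ := ha
  refine ⟨b i₀ * (↑u⁻¹ : R), fun j => ?_⟩
  have key := h (fun k => a i₀ * (if k = j then 1 else 0) - a j * (if k = i₀ then 1 else 0)) ?_
  · simp only [mul_sub, Finset.sum_sub_distrib, mul_ite, mul_one, mul_zero,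
      Finset.sum_ite_eq', Finset.mem_univ, if_true] at key
    have : b j * a i₀ = b i₀ * a j := by linear_combination key
    have h2 : (↑u⁻¹ : R) * a i₀ = 1 := by
      rw [← hu]; exact u.inv_mul
    calc b j = b j * ((↑u⁻¹ : R) * a i₀) := by rw [h2, mul_one]
      _ = (b j * a i₀) * (↑u⁻¹ : R) := by ring
      _ = (b i₀ * a j) * (↑u⁻¹ : R) := by rw [this]
      _ = b i₀ * (↑u⁻¹ : R) * a j := by ring
  · simp only [mul_sub, Finset.sum_sub_distrib, mul_ite, mul_one, mul_zero,
      Finset.sum_ite_eq', Finset.mem_univ, if_true]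
    ring
end

section
/- Let R be a commutative ring satisfying the Kock–Lawvere cancellation property: for every c ∈ R, if c·d = 0 for all d ∈ R with d² = 0, then c = 0. Let a = (a₁, …, aₙ) and b = (b₁, …, bₙ) be vectors in Rⁿ, where at least one coordinate aᵢ of a is invertible (a unit) in R. If for every δ ∈ D(n) the implication (a • δ = 0 ⟹ b • δ = 0) holds, then there exists λ ∈ R with b = λ · a. -/
open Finset in
/-- Suppose `R` satisfies the Kock–Lawvere cancellation property. If `a ∈ Rⁿ` has
some unit coordinate and for every `δ ∈ D(n)` (i.e. all pairwise products of the
coordinates of `δ` vanish) we have `a • δ = 0 ⟹ b • δ = 0`, then `b = λ · a`. -/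
theorem stmt_4 {R : Type*} [CommRing R]
    (KL : ∀ c : R, (∀ d : R, d ^ 2 = 0 → c * d = 0) → c = 0)
    {n : ℕ} (a b : Fin n → R) (ha : ∃ i, IsUnit (a i))
    (h : ∀ δ : Fin n → R, (∀ i j, δ i * δ j = 0) →
      (∑ i, a i * δ i) = 0 → (∑ i, b i * δ i) = 0) :
    ∃ lam : R, ∀ i, b i = lam * a i := by
  obtain ⟨i₀, hu⟩ := ha
  obtain ⟨u, hu1⟩ := hu.exists_right_inv
  refine ⟨b i₀ * u, fun j => ?_⟩
  by_cases hj : j = i₀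
  · subst hj
    calc b j = b j * (a j * u) := by rw [hu1, mul_one]
    _ = b j * u * a j := by ring
  · have key : ∀ d : R, d ^ 2 = 0 → (b j - b i₀ * u * a j) * d = 0 := by
      intro d hd
      set δ : Fin n → R := fun i =>
        (if i = j then d else 0) + (if i = i₀ then -(a j * u * d) else 0) with hδ
      have hc : ∀ i, ∃ c, δ i = c * d := by
        intro i
        refine ⟨(if i = j then 1 else 0) + (if i = i₀ then -(a j * u) else 0), ?_⟩
        simp only [hδ]
        split_ifs <;> ring
      have hprod : ∀ i k, δ i * δ k = 0 := by
        intro i k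
        obtain ⟨c, hci⟩ := hc i
        obtain ⟨c', hck⟩ := hc k
        have : δ i * δ k = c * c' * d ^ 2 := by rw [hci, hck]; ring
        rw [this, hd, mul_zero]
      have hsum : ∀ v : Fin n → R,
          (∑ i, v i * δ i) = v j * d + v i₀ * -(a j * u * d) := by
        intro v
        simp only [hδ, mul_add, Finset.sum_add_distrib, mul_ite, mul_zero,
          Finset.sum_ite_eq', Finset.mem_univ, if_true]
      have ha0 : (∑ i, a i * δ i) = 0 := by
        rw [hsum]
        have h1 : a i₀ * (a j * u * d) = a j * d := by
          rw [show a i₀ * (a j * u * d) = a j * (a i₀ * u) * d by ring, hu1]; ring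
        rw [mul_neg, h1]; ring
      have hb0 := h δ hprod ha0
      rw [hsum] at hb0
      linear_combination hb0
    exact sub_eq_zero.mp (KL _ key)
end

section
/- Let R be a commutative ring in which 2 is invertible and which satisfies the Kock–Lawvere cancellation property: for every c ∈ R, if c·d = 0 for all d ∈ R with d² = 0, then c = 0. Let z ∈ D(n) have the property that z + u ∈ D(n) for every u ∈ D(n). Then z = 0. (Hence 0 is the unique point x of D(n) such that every first-order neighbour of x lies in D(n), i.e. the base point of a first-order neighbourhood can be reconstructed from it as a set.) -/
/-- Let `R` be a commutative ring in which `2` is invertible and which satisfies the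
Kock–Lawvere cancellation property. If `z ∈ D(n)` is such that `z + u ∈ D(n)` for
every `u ∈ D(n)`, then `z = 0`.  (Here `D(n)` is the set of `n`-tuples whose pairwise
products all vanish.) -/
theorem stmt_5 {R : Type*} [CommRing R] (h2 : IsUnit (2 : R))
    (KL : ∀ c : R, (∀ d : R, d ^ 2 = 0 → c * d = 0) → c = 0)
    {n : ℕ} (z : Fin n → R) (hz : ∀ i j, z i * z j = 0)
    (h : ∀ u : Fin n → R, (∀ i j, u i * u j = 0) →
      (∀ i j, (z i + u i) * (z j + u j) = 0)) :
    z = 0 := by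
  funext i
  show z i = 0
  apply KL
  intro d hd
  have hu : ∀ j k : Fin n, (fun k => if k = i then d else 0) j * (fun k => if k = i then d else 0) k = 0 := by
    intro j k
    by_cases hj : j = i <;> by_cases hk : k = i <;> simp [hj, hk]
    simpa [pow_two] using hd
  have hthis := h _ hu i i
  simp only [if_pos rfl] at hthis
  have h2z : 2 * (z i * d) = 2 * 0 := by
    have hzz := hz i i
    simp only [ite_true, eq_self_iff_true] at hthis
    rw [mul_zero]
    linear_combination hthis - hzz - hd
  exact h2.mul_left_cancel h2z
end

section
/- Let R be a commutative ring, ψ a polynomial in n variables over R, and a, d ∈ Rⁿ with dᵢ·dⱼ = 0 for all i, j. Then ψ(a + d) = ψ(a) + Σᵢ (∂ψ/∂xᵢ)(a) · dᵢ, where ∂ψ/∂xᵢ denotes the formal partial derivative of the polynomial ψ with respect to the i-th variable. -/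
open MvPolynomial Finset in
/-- First-order Taylor expansion for polynomials: if the pairwise products of the
coordinates of `d` vanish, then `ψ(a + d) = ψ(a) + Σᵢ (∂ψ/∂xᵢ)(a) · dᵢ`. -/
theorem stmt_7 {R : Type*} [CommRing R] {n : ℕ} (ψ : MvPolynomial (Fin n) R)
    (a d : Fin n → R) (hd : ∀ i j, d i * d j = 0) :
    MvPolynomial.eval (a + d) ψ =
      MvPolynomial.eval a ψ +
        ∑ i, MvPolynomial.eval a (MvPolynomial.pderiv i ψ) * d i := by
  induction ψ using MvPolynomial.induction_on with
  | C r => simp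
  | add p q hp hq =>
    simp only [map_add, hp, hq, add_mul, Finset.sum_add_distrib]
    ring
  | mul_X p i hp =>
    simp only [map_mul, hp, eval_X, pderiv_mul]
    have hx : (a + d) i = a i + d i := rfl
    rw [hx]
    have key : ∀ j, MvPolynomial.eval a (p * MvPolynomial.pderiv j (MvPolynomial.X i)) * d j
        = MvPolynomial.eval a p * (if j = i then d i else 0) := by
      intro j
      rcases eq_or_ne j i with rfl | h
      · simp
      · rw [MvPolynomial.pderiv_X_of_ne h.symm]
        simp [h]
    have hsum : (∑ j, MvPolynomial.eval a (MvPolynomial.pderiv j p * MvPolynomial.X i +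
          p * MvPolynomial.pderiv j (MvPolynomial.X i)) * d j)
        = (∑ j, MvPolynomial.eval a (MvPolynomial.pderiv j p) * d j) * a i
          + MvPolynomial.eval a p * d i := by
      rw [Finset.sum_mul]
      rw [show MvPolynomial.eval a p * d i
          = ∑ j, MvPolynomial.eval a p * (if j = i then d i else 0) from by
        rw [Finset.sum_congr rfl fun j _ => mul_ite (j = i) (MvPolynomial.eval a p) (d i) 0]
        simp]
      rw [← Finset.sum_add_distrib]
      refine Finset.sum_congr rfl fun j _ => ?_
      rw [map_add, add_mul]
      congr 1
      · simp [mul_assoc, mul_comm (a i) (d j)]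
      · exact key j
    rw [hsum]
    have hsd : (∑ j, MvPolynomial.eval a (MvPolynomial.pderiv j p) * d j) * d i = 0 := by
      rw [Finset.sum_mul]
      refine Finset.sum_eq_zero fun j _ => ?_
      rw [mul_assoc, hd j i, mul_zero]
    linear_combination hsd
end

section
/- Let R be a commutative ring in which 2 is invertible and which satisfies the Kock–Lawvere cancellation property: for every c ∈ R, if c·d = 0 for all d ∈ R with d² = 0, then c = 0. Let x, y, z, p, q, r, s, t ∈ R and let (dx, dy, dp, dq) ∈ D(4). Let f₂(ξ, η) = z + p(ξ − x) + q(η − y) + ½r(ξ − x)² + s(ξ − x)(η − y) + ½t(η − y)². Then the following are equivalent: (i) for all (e₁, e₂) ∈ D(2), f₂(x + dx + e₁, y + dy + e₂) = z + p·dx + q·dy + (p + dp)·e₁ + (q + dq)·e₂; (ii) the triple (r, s, t) solves the linear system r·dx + s·dy = dp and s·dx + t·dy = dq. (Condition (i) says that the surface element P' = (x+dx, y+dy, z+p·dx+q·dy, p+dp, q+dq), which is in united position with P = (x,y,z,p,q), belongs to the calotte K = (x,y,z,p,q,r,s,t).) -/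
/-- Let `R` satisfy the Kock–Lawvere cancellation property and have `2` invertible.
Let `(dx,dy,dp,dq) ∈ D(4)` and let
`f₂(ξ,η) = z + p(ξ−x) + q(η−y) + ½r(ξ−x)² + s(ξ−x)(η−y) + ½t(η−y)²`.
Then the surface element `(x+dx, y+dy, z+p·dx+q·dy, p+dp, q+dq)` belongs to the
calotte `(x,y,z,p,q,r,s,t)` — i.e. for all `(e₁,e₂) ∈ D(2)`,
`f₂(x+dx+e₁, y+dy+e₂) = z + p·dx + q·dy + (p+dp)·e₁ + (q+dq)·e₂` —
iff `(r,s,t)` solves the system `r·dx + s·dy = dp` and `s·dx + t·dy = dq`. -/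
theorem stmt_8 {R : Type*} [CommRing R] [Invertible (2 : R)]
    (KL : ∀ c : R, (∀ d : R, d ^ 2 = 0 → c * d = 0) → c = 0)
    (x y z p q r s t dx dy dp dq : R)
    (hD : ∀ u ∈ ({dx, dy, dp, dq} : Set R), ∀ v ∈ ({dx, dy, dp, dq} : Set R),
      u * v = 0) :
    (∀ e₁ e₂ : R, (e₁ * e₁ = 0 ∧ e₁ * e₂ = 0 ∧ e₂ * e₂ = 0) →
        (z + p * ((x + dx + e₁) - x) + q * ((y + dy + e₂) - y)
          + ⅟(2 : R) * r * ((x + dx + e₁) - x) ^ 2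
          + s * ((x + dx + e₁) - x) * ((y + dy + e₂) - y)
          + ⅟(2 : R) * t * ((y + dy + e₂) - y) ^ 2)
        = z + p * dx + q * dy + (p + dp) * e₁ + (q + dq) * e₂)
    ↔ (r * dx + s * dy = dp ∧ s * dx + t * dy = dq) := by
  have hi : (⅟(2 : R)) * 2 = 1 := invOf_mul_self 2
  have hxx : dx * dx = 0 := hD dx (by simp) dx (by simp)
  have hyy : dy * dy = 0 := hD dy (by simp) dy (by simp)
  have hxy : dx * dy = 0 := hD dx (by simp) dy (by simp)
  constructor
  · intro h
    constructor
    · have key : r * dx + s * dy - dp = 0 := by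
        apply KL
        intro d hd
        have hdd : d * d = 0 := by linear_combination hd
        have E := h d 0 ⟨hdd, by ring, by ring⟩
        linear_combination E - ⅟(2:R)*r*hxx - ⅟(2:R)*t*hyy - s*hxy
          - ⅟(2:R)*r*hdd - r*dx*d*hi
      linear_combination key
    · have key : s * dx + t * dy - dq = 0 := by
        apply KL
        intro d hd
        have hdd : d * d = 0 := by linear_combination hd
        have E := h 0 d ⟨by ring, by ring, hdd⟩
        linear_combination E - ⅟(2:R)*r*hxx - ⅟(2:R)*t*hyy - s*hxy
          - ⅟(2:R)*t*hdd - t*dy*d*hi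
      linear_combination key
  · rintro ⟨h1, h2⟩ e₁ e₂ ⟨h11, h12, h22⟩
    linear_combination ⅟(2:R)*r*hxx + ⅟(2:R)*t*hyy + s*hxy
      + ⅟(2:R)*r*h11 + ⅟(2:R)*t*h22 + s*h12
      + e₁*h1 + e₂*h2 + r*dx*e₁*hi + t*dy*e₂*hi
end

section
/- Let R be a commutative ring satisfying the Kock–Lawvere cancellation property: for every c ∈ R, if c·d = 0 for all d ∈ R with d² = 0, then c = 0. Let ψ be a polynomial in 5 variables (x, y, z, p, q) over R, let (x, y, z, p, q) ∈ R⁵ with ψ(x, y, z, p, q) = 0, and let r, s, t ∈ R. Write ψ_x, ψ_y, ψ_z, ψ_p, ψ_q for the formal partial derivatives of ψ evaluated at (x, y, z, p, q). Then the following are equivalent: (i) for all (dx, dy) ∈ D(2), ψ(x + dx, y + dy, z + p·dx + q·dy, p + r·dx + s·dy, q + s·dx + t·dy) = 0; (ii) the triple (r, s, t) solves the linear system ψ_p·r + ψ_q·s = −ψ_x − p·ψ_z and ψ_p·s + ψ_q·t = −ψ_y − q·ψ_z. (Condition (i) says that the calotte (x,y,z,p,q,r,s,t) is a solution calotte of the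 first order PDE ψ = 0, i.e. all its surface elements satisfy ψ = 0.) -/
open MvPolynomial Finset in
lemma taylor_aux {R : Type*} [CommRing R] {σ : Type*} [Fintype σ] [DecidableEq σ]
    (ψ : MvPolynomial σ R) (v δ : σ → R) (h : ∀ i j, δ i * δ j = 0) :
    MvPolynomial.eval (fun i => v i + δ i) ψ
      = MvPolynomial.eval v ψ + ∑ i, δ i * MvPolynomial.eval v (pderiv i ψ) := by
  induction ψ using MvPolynomial.induction_on with
  | C a => simp
  | add f g hf hg =>
      simp only [map_add, hf, hg, mul_add, Finset.sum_add_distrib]; ring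
  | mul_X f n hf =>
      simp only [map_mul, hf, eval_X, pderiv_mul]
      have key : ∀ i : σ, δ i * MvPolynomial.eval v (pderiv i f * X n + f * pderiv i (X n))
          = δ i * MvPolynomial.eval v (pderiv i f) * v n
            + (if i = n then δ n * MvPolynomial.eval v f else 0) := by
        intro i
        by_cases hin : i = n <;> simp [hin, pderiv_X, Pi.single_apply] <;> ring
      rw [Finset.sum_congr rfl (fun i _ => key i), Finset.sum_add_distrib,
        Finset.sum_ite_eq' Finset.univ n]
      simp only [Finset.mem_univ, if_true]
      have hz : (∑ i, δ i * MvPolynomial.eval v (pderiv i f)) * δ n = 0 := by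
        rw [Finset.sum_mul]
        refine Finset.sum_eq_zero fun i _ => ?_
        rw [mul_comm (δ i), mul_assoc, h i n, mul_zero]
      have expand : (MvPolynomial.eval v f + ∑ i, δ i * MvPolynomial.eval v (pderiv i f))
            * (v n + δ n)
          = MvPolynomial.eval v f * v n + MvPolynomial.eval v f * δ n
            + (∑ i, δ i * MvPolynomial.eval v (pderiv i f)) * v n
            + (∑ i, δ i * MvPolynomial.eval v (pderiv i f)) * δ n := by ring
      rw [expand, hz, Finset.sum_mul]
      ring

open MvPolynomial in
/-- Let `R` satisfy the Kock–Lawvere cancellation property, let `ψ` be a polynomial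
in the 5 variables `(x,y,z,p,q)` with `ψ(x,y,z,p,q) = 0`.  Then the calotte
`(x,y,z,p,q,r,s,t)` is a solution calotte of the PDE `ψ = 0`, i.e.
`ψ(x+dx, y+dy, z+p·dx+q·dy, p+r·dx+s·dy, q+s·dx+t·dy) = 0` for all `(dx,dy) ∈ D(2)`,
iff `(r,s,t)` solves the system
`ψ_p·r + ψ_q·s = −ψ_x − p·ψ_z` and `ψ_p·s + ψ_q·t = −ψ_y − q·ψ_z`. -/
theorem stmt_9 {R : Type*} [CommRing R]
    (KL : ∀ c : R, (∀ d : R, d ^ 2 = 0 → c * d = 0) → c = 0)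
    (ψ : MvPolynomial (Fin 5) R) (x y z p q r s t : R)
    (hψ : MvPolynomial.eval ![x, y, z, p, q] ψ = 0) :
    (∀ dx dy : R, (dx * dx = 0 ∧ dx * dy = 0 ∧ dy * dy = 0) →
        MvPolynomial.eval
          ![x + dx, y + dy, z + p * dx + q * dy,
            p + r * dx + s * dy, q + s * dx + t * dy] ψ = 0)
    ↔ (MvPolynomial.eval ![x, y, z, p, q] (pderiv 3 ψ) * r
          + MvPolynomial.eval ![x, y, z, p, q] (pderiv 4 ψ) * s
        = -MvPolynomial.eval ![x, y, z, p, q] (pderiv 0 ψ)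
          - p * MvPolynomial.eval ![x, y, z, p, q] (pderiv 2 ψ)
      ∧ MvPolynomial.eval ![x, y, z, p, q] (pderiv 3 ψ) * s
          + MvPolynomial.eval ![x, y, z, p, q] (pderiv 4 ψ) * t
        = -MvPolynomial.eval ![x, y, z, p, q] (pderiv 1 ψ)
          - q * MvPolynomial.eval ![x, y, z, p, q] (pderiv 2 ψ)) := by
  set v : Fin 5 → R := ![x, y, z, p, q] with hv
  set a0 := MvPolynomial.eval v (pderiv 0 ψ)
  set a1 := MvPolynomial.eval v (pderiv 1 ψ)
  set a2 := MvPolynomial.eval v (pderiv 2 ψ)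
  set a3 := MvPolynomial.eval v (pderiv 3 ψ)
  set a4 := MvPolynomial.eval v (pderiv 4 ψ)
  have main : ∀ dx dy : R, (dx * dx = 0 ∧ dx * dy = 0 ∧ dy * dy = 0) →
      MvPolynomial.eval
        ![x + dx, y + dy, z + p * dx + q * dy,
          p + r * dx + s * dy, q + s * dx + t * dy] ψ
      = (a0 + p * a2 + r * a3 + s * a4) * dx + (a1 + q * a2 + s * a3 + t * a4) * dy := by
    intro dx dy ⟨h1, h2, h3⟩
    set c1 : Fin 5 → R := ![1, 0, p, r, s] with hc1
    set c2 : Fin 5 → R := ![0, 1, q, s, t] with hc2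
    set δ : Fin 5 → R := fun i => c1 i * dx + c2 i * dy with hδ
    have hprod : ∀ i j, δ i * δ j = 0 := by
      intro i j
      have : δ i * δ j = c1 i * c1 j * (dx * dx)
          + (c1 i * c2 j + c2 i * c1 j) * (dx * dy) + c2 i * c2 j * (dy * dy) := by
        simp only [hδ]; ring
      rw [this, h1, h2, h3]; ring
    have hvec : (![x + dx, y + dy, z + p * dx + q * dy,
          p + r * dx + s * dy, q + s * dx + t * dy] : Fin 5 → R) = fun i => v i + δ i := by
      funext i; fin_cases i <;> simp [hv, hδ, hc1, hc2] <;> ring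
    rw [hvec, taylor_aux ψ v δ hprod, hψ, Fin.sum_univ_five]
    have e0 : δ 0 = dx := by simp [hδ, hc1, hc2]
    have e1 : δ 1 = dy := by simp [hδ, hc1, hc2]
    have e2 : δ 2 = p * dx + q * dy := by simp [hδ, hc1, hc2]
    have e3 : δ 3 = r * dx + s * dy := by simp [hδ, hc1, hc2]
    have e4 : δ 4 = s * dx + t * dy := by simp [hδ, hc1, hc2]
    rw [e0, e1, e2, e3, e4]
    ring
  constructor
  · intro H
    have hA : a0 + p * a2 + r * a3 + s * a4 = 0 := by
      apply KL
      intro d hd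
      have := (main d 0 ⟨by linear_combination hd, by ring, by ring⟩).symm.trans
        (H d 0 ⟨by linear_combination hd, by ring, by ring⟩)
      linear_combination this
    have hB : a1 + q * a2 + s * a3 + t * a4 = 0 := by
      apply KL
      intro d hd
      have := (main 0 d ⟨by ring, by ring, by linear_combination hd⟩).symm.trans
        (H 0 d ⟨by ring, by ring, by linear_combination hd⟩)
      linear_combination this
    exact ⟨by linear_combination hA, by linear_combination hB⟩
  · rintro ⟨e1, e2⟩ dx dy hd
    rw [main dx dy hd]
    linear_combination dx * e1 + dy * e2
end

section
/- Let R be a commutative ring and let ψ_x, ψ_y, ψ_z, ψ_p, ψ_q, p, q ∈ R with at least one of ψ_p, ψ_q invertible (a unit). Set A = −ψ_x − p·ψ_z and B = −ψ_y − q·ψ_z. Let dx, dy, dp, dq ∈ R. Then the following are equivalent: (i) every triple (r, s, t) ∈ R³ solving the system ψ_p·r + ψ_q·s = A and ψ_p·s + ψ_q·t = B also solves the system r·dx + s·dy = dp and s·dx + t·dy = dq; (ii) there exists a scalar λ ∈ R with (dx, dy, dp, dq) = λ·(ψ_p, ψ_q, A, B). Moreover the scalar λ in (ii) is uniquely determined.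 -/
/-- The characteristic differential equation.  Let `ψ_x, ψ_y, ψ_z, ψ_p, ψ_q, p, q ∈ R`
with at least one of `ψ_p, ψ_q` a unit, and set `A = −ψ_x − p·ψ_z`,
`B = −ψ_y − q·ψ_z`.  Then every solution `(r,s,t)` of `ψ_p·r + ψ_q·s = A`,
`ψ_p·s + ψ_q·t = B` also solves `r·dx + s·dy = dp`, `s·dx + t·dy = dq`
iff `(dx,dy,dp,dq) = λ·(ψ_p, ψ_q, A, B)` for some scalar `λ`; moreover this `λ`
is uniquely determined. -/
theorem stmt_11 {R : Type*} [CommRing R]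
    (ψx ψy ψz ψp ψq p q : R) (hunit : IsUnit ψp ∨ IsUnit ψq)
    (dx dy dp dq : R) :
    ((∀ r s t : R,
        (ψp * r + ψq * s = -ψx - p * ψz ∧ ψp * s + ψq * t = -ψy - q * ψz) →
        (r * dx + s * dy = dp ∧ s * dx + t * dy = dq)) ↔
      ∃ lam : R, dx = lam * ψp ∧ dy = lam * ψq ∧
        dp = lam * (-ψx - p * ψz) ∧ dq = lam * (-ψy - q * ψz)) ∧
    (∀ lam₁ lam₂ : R,
      (dx = lam₁ * ψp ∧ dy = lam₁ * ψq ∧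
        dp = lam₁ * (-ψx - p * ψz) ∧ dq = lam₁ * (-ψy - q * ψz)) →
      (dx = lam₂ * ψp ∧ dy = lam₂ * ψq ∧
        dp = lam₂ * (-ψx - p * ψz) ∧ dq = lam₂ * (-ψy - q * ψz)) →
      lam₁ = lam₂) := by
  constructor
  · constructor
    · intro H
      rcases hunit with h | h
      · obtain ⟨u, hu⟩ := h.exists_left_inv
        have h0 := H (u*(-ψx - p*ψz) - u^2*ψq*(-ψy - q*ψz)) (u*(-ψy - q*ψz)) 0
          ⟨by linear_combination ((-ψx - p*ψz) - u*ψq*(-ψy - q*ψz)) * hu,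
           by linear_combination (-ψy - q*ψz) * hu⟩
        have h1 := H (u*(-ψx - p*ψz) - u^2*ψq*(-ψy - q*ψz) + u^2*ψq^2)
            (u*(-ψy - q*ψz) - u*ψq) 1
          ⟨by linear_combination ((-ψx - p*ψz) - u*ψq*(-ψy - q*ψz) + u*ψq^2) * hu,
           by linear_combination ((-ψy - q*ψz) - ψq) * hu⟩
        refine ⟨u*dx, ?_, ?_, ?_, ?_⟩
        · linear_combination (-dx) * hu
        · linear_combination h1.2 - h0.2
        · linear_combination (u*(-ψy - q*ψz)) * (h1.2 - h0.2) - h0.1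
        · linear_combination -h0.2
      · obtain ⟨v, hv⟩ := h.exists_left_inv
        have h0 := H 0 (v*(-ψx - p*ψz))
            (v*(-ψy - q*ψz) - v^2*ψp*(-ψx - p*ψz))
          ⟨by linear_combination (-ψx - p*ψz) * hv,
           by linear_combination ((-ψy - q*ψz) - v*ψp*(-ψx - p*ψz)) * hv⟩
        have h1 := H 1 (v*(-ψx - p*ψz) - v*ψp)
            (v*(-ψy - q*ψz) - v^2*ψp*(-ψx - p*ψz) + v^2*ψp^2)
          ⟨by linear_combination ((-ψx - p*ψz) - ψp) * hv,
           by linear_combination ((-ψy - q*ψz) - v*ψp*(-ψx - p*ψz) + v*ψp^2) * hv⟩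
        refine ⟨v*dy, ?_, ?_, ?_, ?_⟩
        · linear_combination h1.1 - h0.1
        · linear_combination (-dy) * hv
        · linear_combination -h0.1
        · linear_combination (v*(-ψx - p*ψz)) * (h1.1 - h0.1) - h0.2
    · rintro ⟨lam, h1, h2, h3, h4⟩ r s t ⟨e1, e2⟩
      constructor
      · linear_combination r*h1 + s*h2 + lam*e1 - h3
      · linear_combination s*h1 + t*h2 + lam*e2 - h4
  · rintro lam₁ lam₂ ⟨a1, b1, -, -⟩ ⟨a2, b2, -, -⟩
    rcases hunit with h | h
    · obtain ⟨u, hu⟩ := h.exists_left_inv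
      linear_combination (-u)*a1 + u*a2 + (lam₂ - lam₁)*hu
    · obtain ⟨v, hv⟩ := h.exists_left_inv
      linear_combination (-v)*b1 + v*b2 + (lam₂ - lam₁)*hv
end

section
/- Let R be a commutative ring satisfying the Kock–Lawvere cancellation property: for every c ∈ R, if c·d = 0 for all d ∈ R with d² = 0, then c = 0. Let ψ_p, ψ_q ∈ R with at least one of them invertible (a unit), and let dx, dy ∈ R. Then the following are equivalent: (i) for every (δp, δq) ∈ D(2), the implication (ψ_p·δp + ψ_q·δq = 0 ⟹ dx·δp + dy·δq = 0) holds; (ii) there exists λ ∈ R with (dx, dy) = λ·(ψ_p, ψ_q). (Condition (i) says that (x+dx, y+dy, z+p·dx+q·dy) is a Monge-characteristic neighbour point of the surface element P = (x,y,z,p,q) of the PDE ψ = 0; condition (ii) is the condition for it to be a characteristic neighbour point in the calotte sense, so the two notions of characteristic neighbour point agree.) -/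
lemma stmt_12_aux {R : Type*} [CommRing R]
    (KL : ∀ c : R, (∀ d : R, d ^ 2 = 0 → c * d = 0) → c = 0)
    (ψp ψq : R) (u : IsUnit ψp) (dx dy : R)
    (h : ∀ δp δq : R, (δp * δp = 0 ∧ δp * δq = 0 ∧ δq * δq = 0) →
        ψp * δp + ψq * δq = 0 → dx * δp + dy * δq = 0) :
    ∃ lam : R, dx = lam * ψp ∧ dy = lam * ψq := by
  obtain ⟨v, hv, hv'⟩ : ∃ v : R, ψp * v = 1 ∧ v * ψp = 1 := by
    obtain ⟨u, rfl⟩ := u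
    exact ⟨u.inv, u.val_inv, u.inv_val⟩
  refine ⟨dx * v, by rw [mul_assoc, hv', mul_one], ?_⟩
  have key : dy - dx * v * ψq = 0 := by
    apply KL
    intro d hd
    have hd2 : d * d = 0 := by rw [← pow_two]; exact hd
    have := h (-(v * ψq * d)) d
      ⟨by linear_combination (v*v*ψq*ψq)*hd2, by linear_combination (-(v*ψq))*hd2, hd2⟩
      (by have : ψp * -(v * ψq * d) + ψq * d = (1 - ψp * v) * (ψq * d) := by ring
          rw [this, hv]; ring)
    linear_combination this
  linear_combination key

/-- Monge characteristics agree with calotte characteristics.  Let `R` satisfy the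
Kock–Lawvere cancellation property, and let `ψ_p, ψ_q ∈ R` with at least one of them
a unit.  Then: for every `(δp, δq) ∈ D(2)`, `ψ_p·δp + ψ_q·δq = 0` implies
`dx·δp + dy·δq = 0`, iff `(dx, dy) = λ·(ψ_p, ψ_q)` for some `λ ∈ R`. -/
theorem stmt_12 {R : Type*} [CommRing R]
    (KL : ∀ c : R, (∀ d : R, d ^ 2 = 0 → c * d = 0) → c = 0)
    (ψp ψq : R) (hunit : IsUnit ψp ∨ IsUnit ψq) (dx dy : R) :
    (∀ δp δq : R, (δp * δp = 0 ∧ δp * δq = 0 ∧ δq * δq = 0) →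
        ψp * δp + ψq * δq = 0 → dx * δp + dy * δq = 0) ↔
      ∃ lam : R, dx = lam * ψp ∧ dy = lam * ψq := by
  constructor
  · intro h
    rcases hunit with u | u
    · exact stmt_12_aux KL ψp ψq u dx dy h
    · obtain ⟨lam, h1, h2⟩ := stmt_12_aux KL ψq ψp u dy dx
        (fun δp δq ⟨a, b, c⟩ hz => by
          have := h δq δp ⟨c, by rwa [mul_comm], a⟩ (by linear_combination hz)
          linear_combination this)
      exact ⟨lam, h2, h1⟩
  · rintro ⟨lam, rfl, rfl⟩ δp δq _ hz
    linear_combination lam * hz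
end

section
/- Let R be a commutative ring, and for i = 1, …, 5 let g_i and L_i be polynomials in 5 variables over R. Let P ∈ R⁵ and let dP = (dP₁, …, dP₅) ∈ D(5), i.e. dP_i·dP_j = 0 for all i, j. Suppose that dP_i = (Σ_j L_j(P)·dP_j) · g_i(P) for all i = 1, …, 5. Then −dP_i = (Σ_j L_j(P + dP)·(−dP_j)) · g_i(P + dP) for all i = 1, …, 5. (This expresses the symmetry of the characteristic-neighbour relation ≈_Ψ: if P' = P + dP satisfies dP = λ(P; dP)·ψ̃(P), where λ(P; −) is the linear extension with coefficient functions L_j of the scalar factor and ψ̃ is the characteristic vector field of the PDE, then −dP = λ(P'; −dP)·ψ̃(P'), i.e. P ≈_Ψ P' implies P' ≈_Ψ P.) -/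
open MvPolynomial Finset in
lemma eval_add_mul_dP {R : Type*} [CommRing R] {n : Type*} [Fintype n]
    (P dP : n → R) (hdP : ∀ i j, dP i * dP j = 0)
    (f : MvPolynomial n R) :
    ∀ j, MvPolynomial.eval (P + dP) f * dP j = MvPolynomial.eval P f * dP j := by
  induction f using MvPolynomial.induction_on with
  | C a => intro j; simp
  | add p q hp hq => intro j; simp [add_mul, hp j, hq j]
  | mul_X p i hp =>
      intro j
      simp only [map_mul, eval_X, Pi.add_apply]
      have h1 : MvPolynomial.eval (P + dP) p * dP j = MvPolynomial.eval P p * dP j := hp j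
      calc MvPolynomial.eval (P + dP) p * (P i + dP i) * dP j
          = (MvPolynomial.eval (P + dP) p * dP j) * P i
            + MvPolynomial.eval (P + dP) p * (dP i * dP j) := by ring
        _ = (MvPolynomial.eval P p * dP j) * P i
            + MvPolynomial.eval (P + dP) p * 0 := by rw [h1, hdP i j]
        _ = MvPolynomial.eval P p * P i * dP j := by ring

open MvPolynomial Finset in
/-- Symmetry of the characteristic-neighbour relation.  Let `g i` and `L i`
(`i = 1, …, 5`) be polynomials in 5 variables over `R`, let `P ∈ R⁵` and
`dP ∈ D(5)` (all pairwise products of the coordinates of `dP` vanish).  If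
`dPᵢ = (Σⱼ Lⱼ(P)·dPⱼ) · gᵢ(P)` for all `i`, then
`−dPᵢ = (Σⱼ Lⱼ(P + dP)·(−dPⱼ)) · gᵢ(P + dP)` for all `i`. -/
theorem stmt_13 {R : Type*} [CommRing R]
    (g L : Fin 5 → MvPolynomial (Fin 5) R) (P dP : Fin 5 → R)
    (hdP : ∀ i j, dP i * dP j = 0)
    (h : ∀ i, dP i =
      (∑ j, MvPolynomial.eval P (L j) * dP j) * MvPolynomial.eval P (g i)) :
    ∀ i, -dP i =
      (∑ j, MvPolynomial.eval (P + dP) (L j) * (-dP j)) *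
        MvPolynomial.eval (P + dP) (g i) := by
  intro i
  have key : (∑ j, MvPolynomial.eval (P + dP) (L j) * (-dP j)) *
      MvPolynomial.eval (P + dP) (g i)
      = -((∑ j, MvPolynomial.eval P (L j) * dP j) * MvPolynomial.eval P (g i)) := by
    rw [Finset.sum_mul, Finset.sum_mul, ← Finset.sum_neg_distrib]
    refine Finset.sum_congr rfl fun j _ => ?_
    have h1 : MvPolynomial.eval (P + dP) (L j) * dP j
        = MvPolynomial.eval P (L j) * dP j := eval_add_mul_dP P dP hdP (L j) j
    have h2 : MvPolynomial.eval (P + dP) (g i) * dP j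
        = MvPolynomial.eval P (g i) * dP j := eval_add_mul_dP P dP hdP (g i) j
    calc MvPolynomial.eval (P + dP) (L j) * (-dP j) * MvPolynomial.eval (P + dP) (g i)
        = -(MvPolynomial.eval (P + dP) (g i) * dP j) * MvPolynomial.eval (P + dP) (L j) := by ring
      _ = -(MvPolynomial.eval P (g i) * dP j) * MvPolynomial.eval (P + dP) (L j) := by rw [h2]
      _ = -(MvPolynomial.eval (P + dP) (L j) * dP j) * MvPolynomial.eval P (g i) := by ring
      _ = -(MvPolynomial.eval P (L j) * dP j) * MvPolynomial.eval P (g i) := by rw [h1]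
      _ = -(MvPolynomial.eval P (L j) * dP j * MvPolynomial.eval P (g i)) := by ring
  rw [key, ← h i]
end
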